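/- arXiv:1303.4048 — 2 statements merged into one kernel-verified Lean document; each statement's English description precedes it below -/
import Mathlib

section
/- Let k be odd and let G be a connected k-uniform hypergraph on {1,…,n} with at least one edge. Then zero is not an eigenvalue of the signless Laplacian tensor of G: there is no nonzero x ∈ ℂ^n with ((D+A) x^{k−1})_i = 0 for all i. -/
/-!
Let `i` be a vertex where `‖x i‖` is maximal. The equation `slapC k E x i = 0` says that the
`hdeg E i` products `∏_{j ∈ e ∖ i} x j` sum to `hdeg E i • -(x i) ^ (k - 1)`, while each of them
has modulus at most `‖x i‖ ^ (k - 1)`. The equality case of the triangle inequality forces every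
product to equal `-(x i) ^ (k - 1)`, so every vertex of an edge through `i` again has maximal
modulus. By connectivity all vertices do, and then for an edge `e` with `P = ∏_{j ∈ e} x j` we
get `x j ^ k = -P` for each `j ∈ e`; multiplying, `P ^ k = (-P) ^ k = -P ^ k` as `k` is odd.
Hence `P = 0`, so the common modulus is `0` and `x = 0`.
-/

open Finset

/-- Degree of vertex `i` in the hypergraph with edge set `E`. -/
def hdeg {n : ℕ} (E : Finset (Finset (Fin n))) (i : Fin n) : ℕ :=
  (E.filter fun e => i ∈ e).card

/-- Laplacian tensor action `((D - A) x^{k-1})_i` over ℂ. -/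
noncomputable def lapC (k : ℕ) {n : ℕ} (E : Finset (Finset (Fin n)))
    (x : Fin n → ℂ) (i : Fin n) : ℂ :=
  (hdeg E i : ℂ) * x i ^ (k - 1) -
    ∑ e ∈ E.filter (fun e => i ∈ e), ∏ j ∈ e.erase i, x j

/-- Signless Laplacian tensor action `((D + A) x^{k-1})_i` over ℂ. -/
noncomputable def slapC (k : ℕ) {n : ℕ} (E : Finset (Finset (Fin n)))
    (x : Fin n → ℂ) (i : Fin n) : ℂ :=
  (hdeg E i : ℂ) * x i ^ (k - 1) +
    ∑ e ∈ E.filter (fun e => i ∈ e), ∏ j ∈ e.erase i, x j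

/-- Laplacian tensor action `((D - A) x^{k-1})_i` over ℝ. -/
noncomputable def lapR (k : ℕ) {n : ℕ} (E : Finset (Finset (Fin n)))
    (x : Fin n → ℝ) (i : Fin n) : ℝ :=
  (hdeg E i : ℝ) * x i ^ (k - 1) -
    ∑ e ∈ E.filter (fun e => i ∈ e), ∏ j ∈ e.erase i, x j

/-- Signless Laplacian tensor action `((D + A) x^{k-1})_i` over ℝ. -/
noncomputable def slapR (k : ℕ) {n : ℕ} (E : Finset (Finset (Fin n)))
    (x : Fin n → ℝ) (i : Fin n) : ℝ :=
  (hdeg E i : ℝ) * x i ^ (k - 1) +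
    ∑ e ∈ E.filter (fun e => i ∈ e), ∏ j ∈ e.erase i, x j

/-- The hypergraph with edge set `E` is connected: every pair of distinct vertices is
joined by a chain of edges with consecutive edges intersecting. -/
def HConnected {n : ℕ} (E : Finset (Finset (Fin n))) : Prop :=
  ∀ i j : Fin n, i ≠ j → ∃ m : ℕ, ∃ es : Fin (m + 1) → Finset (Fin n),
    (∀ r, es r ∈ E) ∧ i ∈ es 0 ∧ j ∈ es (Fin.last m) ∧
    ∀ r : Fin m, (es r.castSucc ∩ es r.succ).Nonempty

theorem eq_of_norm_le_of_sum_eq_card_smul {ι F : Type*} [NormedAddCommGroup F]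
    [InnerProductSpace ℝ F] {s : Finset ι} {t : ι → F} {u : F}
    (hnorm : ∀ a ∈ s, ‖t a‖ ≤ ‖u‖) (hsum : ∑ a ∈ s, t a = #s • u) :
    ∀ a ∈ s, t a = u := by
  have hdist : ∑ a ∈ s, ‖t a - u‖ ^ 2 ≤ 0 :=
    calc ∑ a ∈ s, ‖t a - u‖ ^ 2
        ≤ ∑ a ∈ s, (2 * ‖u‖ ^ 2 - 2 * inner ℝ (t a) u) := by
          gcongr with a ha
          rw [norm_sub_sq_real]
          nlinarith [hnorm a ha, norm_nonneg (t a)]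
      _ = 0 := by
          rw [sum_sub_distrib, ← mul_sum, ← mul_sum, ← sum_inner, hsum,
            ← Nat.cast_smul_eq_nsmul ℝ, real_inner_smul_left, real_inner_self_eq_norm_sq]
          simp
  intro a ha
  have := (sum_eq_zero_iff_of_nonneg fun b _ => sq_nonneg ‖t b - u‖).mp
    (le_antisymm hdist (by positivity)) a ha
  simpa [sub_eq_zero] using this

theorem eq_of_le_of_prod_eq_pow_card {ι : Type*} {s : Finset ι} {f : ι → ℝ} {M : ℝ}
    (h0 : ∀ j ∈ s, 0 ≤ f j) (hle : ∀ j ∈ s, f j ≤ M) (hprod : ∏ j ∈ s, f j = M ^ #s) :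
    ∀ j ∈ s, f j = M := by
  classical
  intro j hj
  by_contra hne
  have hlt : f j < M := lt_of_le_of_ne (hle j hj) hne
  have hM : 0 < M := (h0 j hj).trans_lt hlt
  have hrest : ∏ i ∈ s.erase j, f i ≤ M ^ (#s - 1) := by
    rw [← card_erase_of_mem hj, ← prod_const]
    exact prod_le_prod (fun i hi => h0 i (mem_of_mem_erase hi))
      fun i hi => hle i (mem_of_mem_erase hi)
  have : ∏ i ∈ s, f i < M ^ #s :=
    calc ∏ i ∈ s, f i = f j * ∏ i ∈ s.erase j, f i := (mul_prod_erase s f hj).symm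
      _ ≤ f j * M ^ (#s - 1) := mul_le_mul_of_nonneg_left hrest (h0 j hj)
      _ < M * M ^ (#s - 1) := mul_lt_mul_of_pos_right hlt (pow_pos hM _)
      _ = M ^ #s := mul_pow_sub_one (card_ne_zero_of_mem hj) M
  exact this.ne hprod

theorem prod_eq_zero_of_pow_eq_neg_prod {ι R : Type*} [CommRing R] [NoZeroDivisors R]
    [CharZero R] {s : Finset ι} (hs : Odd #s) {x : ι → R}
    (hx : ∀ i ∈ s, x i ^ #s = -∏ j ∈ s, x j) : ∏ j ∈ s, x j = 0 := by
  set P := ∏ j ∈ s, x j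
  have hP : P ^ #s = -P ^ #s :=
    calc P ^ #s = ∏ i ∈ s, x i ^ #s := (prod_pow s _ x).symm
      _ = (-P) ^ #s := by rw [prod_congr rfl hx, prod_const]
      _ = -P ^ #s := hs.neg_pow P
  exact pow_eq_zero_iff (hs.pos.ne') |>.mp (self_eq_neg.mp hP)

theorem HConnected.forall_of_mem_edge {n : ℕ} {E : Finset (Finset (Fin n))}
    (hconn : HConnected E) {P : Fin n → Prop} (hP : ∀ e ∈ E, ∀ i ∈ e, P i → ∀ j ∈ e, P j)
    {i : Fin n} (hi : P i) (j : Fin n) : P j := by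
  rcases eq_or_ne i j with rfl | hij
  · exact hi
  obtain ⟨m, es, hesE, his, hjs, hchain⟩ := hconn i j hij
  have hall : ∀ r, ∀ v ∈ es r, P v := by
    intro r
    induction r using Fin.induction with
    | zero => exact hP _ (hesE 0) i his hi
    | succ r ih =>
      obtain ⟨v, hv⟩ := hchain r
      exact hP _ (hesE _) v (mem_inter.mp hv).2 (ih v (mem_inter.mp hv).1)
  exact hall _ j hjs

section SignlessLaplacian

variable {n k : ℕ} {E : Finset (Finset (Fin n))} {x : Fin n → ℂ} {i : Fin n}

theorem sum_prod_erase_eq_of_slapC_eq_zero (h : slapC k E x i = 0) :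
    ∑ e ∈ E.filter (i ∈ ·), ∏ j ∈ e.erase i, x j = hdeg E i • -(x i ^ (k - 1)) := by
  rw [nsmul_eq_mul]
  unfold slapC at h
  linear_combination h

theorem prod_erase_eq_neg_pow_of_norm_le (hE : ∀ e ∈ E, #e = k) (hx : slapC k E x i = 0)
    (hmax : ∀ j, ‖x j‖ ≤ ‖x i‖) {e : Finset (Fin n)} (he : e ∈ E) (hie : i ∈ e) :
    ∏ j ∈ e.erase i, x j = -(x i ^ (k - 1)) := by
  have hbound : ∀ e ∈ E.filter (i ∈ ·), ‖∏ j ∈ e.erase i, x j‖ ≤ ‖-(x i ^ (k - 1))‖ := by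
    intro e he
    obtain ⟨heE, hie⟩ := mem_filter.mp he
    rw [norm_prod, norm_neg, norm_pow, ← hE e heE, ← card_erase_of_mem hie, ← prod_const]
    exact prod_le_prod (fun _ _ => norm_nonneg _) fun j _ => hmax j
  exact eq_of_norm_le_of_sum_eq_card_smul hbound (sum_prod_erase_eq_of_slapC_eq_zero hx) e
    (mem_filter.mpr ⟨he, hie⟩)

theorem norm_eq_of_mem_edge_of_norm_le (hE : ∀ e ∈ E, #e = k) (hx : slapC k E x i = 0)
    (hmax : ∀ j, ‖x j‖ ≤ ‖x i‖) {e : Finset (Fin n)} (he : e ∈ E) (hie : i ∈ e) :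
    ∀ j ∈ e, ‖x j‖ = ‖x i‖ := by
  have hprod : ∏ j ∈ e.erase i, ‖x j‖ = ‖x i‖ ^ #(e.erase i) := by
    rw [← norm_prod, prod_erase_eq_neg_pow_of_norm_le hE hx hmax he hie, norm_neg, norm_pow,
      card_erase_of_mem hie, hE e he]
  intro j hj
  rcases eq_or_ne j i with rfl | hji
  · rfl
  exact eq_of_le_of_prod_eq_pow_card (fun _ _ => norm_nonneg _) (fun j _ => hmax j) hprod j
    (mem_erase.mpr ⟨hji, hj⟩)

theorem pow_card_eq_neg_prod_of_norm_le (hE : ∀ e ∈ E, #e = k) (hx : slapC k E x i = 0)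
    (hmax : ∀ j, ‖x j‖ ≤ ‖x i‖) {e : Finset (Fin n)} (he : e ∈ E) (hie : i ∈ e) :
    x i ^ #e = -∏ j ∈ e, x j := by
  rw [← mul_prod_erase e x hie, prod_erase_eq_neg_pow_of_norm_le hE hx hmax he hie, hE e he,
    mul_neg, neg_neg, mul_pow_sub_one]
  exact hE e he ▸ card_ne_zero_of_mem hie

theorem norm_eq_of_hConnected (hE : ∀ e ∈ E, #e = k) (hx : ∀ i, slapC k E x i = 0)
    (hconn : HConnected E) (hmax : ∀ j, ‖x j‖ ≤ ‖x i‖) (j : Fin n) : ‖x j‖ = ‖x i‖ := by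
  suffices ∀ v, ∀ j, ‖x j‖ ≤ ‖x v‖ from le_antisymm (hmax j) (this j i)
  refine hconn.forall_of_mem_edge (fun e he v hve hv j hje l => ?_) hmax
  rw [norm_eq_of_mem_edge_of_norm_le hE (hx v) hv he hve j hje]
  exact hv l

end SignlessLaplacian

theorem stmt_6_general {n k : ℕ} (hkodd : Odd k)
    (E : Finset (Finset (Fin n))) (hE : ∀ e ∈ E, e.card = k)
    (hconn : HConnected E) (hne : E.Nonempty) :
    ¬ ∃ x : Fin n → ℂ, x ≠ 0 ∧ ∀ i, slapC k E x i = 0 := by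
  rintro ⟨x, hx0, hx⟩
  obtain ⟨v, hv⟩ := Function.ne_iff.mp hx0
  have : Nonempty (Fin n) := ⟨v⟩
  obtain ⟨i, hmax⟩ := Finite.exists_max fun j => ‖x j‖
  have hnorm : ∀ j, ‖x j‖ = ‖x i‖ := norm_eq_of_hConnected hE hx hconn hmax
  obtain ⟨e, he⟩ := hne
  have hpow : ∀ j ∈ e, x j ^ #e = -∏ l ∈ e, x l := fun j hj =>
    pow_card_eq_neg_prod_of_norm_le hE (hx j) (fun l => (hmax l).trans_eq (hnorm j).symm) he hj
  have hzero := prod_eq_zero_of_pow_eq_neg_prod (hE e he ▸ hkodd) hpow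
  obtain ⟨j, -, hj⟩ := prod_eq_zero_iff.mp hzero
  exact hv (norm_eq_zero.mp (by rw [hnorm v, ← hnorm j, hj, norm_zero]))

theorem stmt_6 {n k : ℕ} (hk : 3 ≤ k) (hn : k ≤ n) (hkodd : Odd k)
    (E : Finset (Finset (Fin n))) (hE : ∀ e ∈ E, e.card = k)
    (hconn : HConnected E) (hne : E.Nonempty) :
    ¬ ∃ x : Fin n → ℂ, x ≠ 0 ∧ ∀ i, slapC k E x i = 0 :=
  stmt_6_general hkodd E hE hconn hne
end

section
/- Let k be even and let G be a connected k-uniform hypergraph on {1,…,n} with at least one edge. Then there exists a nonzero real vector x with ((D−A) x^{k−1})_i = 0 for all i which attains both positive and negative values if and only if G is even-bipartite, i.e., there exists a subset S ⊆ V with S ≠ ∅ and V∖S ≠ ∅ such that |e ∩ S| is even for every edge e ∈ E. -/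
open Finset

/-!
Forward direction: if `|x|` attains its maximum `M > 0` at `i`, then the equation at `i` reads
`∑_{e ∋ i} (M ^ k - ∏_{j ∈ e} x j) = 0` with every summand nonnegative (`k` is even), so every edge
through `i` has product `M ^ k`, which forces `|x j| = M` on that edge. Connectivity spreads this to
all vertices, so `x = M • σ` for the sign vector `σ` of `S = {x < 0}`, and `∏_{j ∈ e} σ j = 1` says
that every edge meets `S` evenly.

Backward direction: the sign vector of an even bipartition is in the kernel, since
`∏_{j ∈ e \ {i}} σ j = σ i = σ i ^ (k - 1)` for every edge `e ∋ i`.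
-/

section SignVector

variable {ι R : Type*} [DecidableEq ι] [CommRing R]

def signVector (S : Finset ι) (j : ι) : R :=
  if j ∈ S then -1 else 1

theorem prod_signVector (S s : Finset ι) :
    ∏ j ∈ s, (signVector S j : R) = (-1) ^ #(s ∩ S) := by
  unfold signVector
  rw [prod_ite_mem, prod_const]

theorem signVector_mul_self (S : Finset ι) (j : ι) :
    (signVector S j : R) * signVector S j = 1 := by
  unfold signVector
  split_ifs <;> simp

theorem signVector_pow_of_odd (S : Finset ι) (j : ι) {m : ℕ} (hm : Odd m) :
    (signVector S j : R) ^ m = signVector S j := by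
  unfold signVector
  split_ifs <;> simp [hm.neg_one_pow]

end SignVector

theorem eq_of_prod_eq_pow_card {ι R : Type*} [CommRing R] [LinearOrder R] [IsStrictOrderedRing R]
    {s : Finset ι} {a : ι → R} {M : R} (hM : 0 < M) (h0 : ∀ j ∈ s, 0 ≤ a j)
    (hle : ∀ j ∈ s, a j ≤ M) (hprod : ∏ j ∈ s, a j = M ^ #s) : ∀ j ∈ s, a j = M := by
  by_contra! ⟨j, hj, hne⟩
  by_cases hzero : ∃ l ∈ s, a l = 0
  · rw [prod_eq_zero_iff.mpr hzero] at hprod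
    exact (pow_pos hM _).ne' hprod.symm
  push Not at hzero
  have hlt : ∏ l ∈ s, a l < ∏ _l ∈ s, M :=
    prod_lt_prod (fun l hl => (h0 l hl).lt_of_ne (hzero l hl).symm) hle
      ⟨j, hj, (hle j hj).lt_of_ne hne⟩
  rw [prod_const, hprod] at hlt
  exact hlt.false

theorem HConnected.forall_of_edge_closed {n : ℕ} {E : Finset (Finset (Fin n))}
    (hconn : HConnected E) {P : Fin n → Prop} (hP : ∀ e ∈ E, ∀ v ∈ e, P v → ∀ w ∈ e, P w)
    {i : Fin n} (hi : P i) (j : Fin n) : P j := by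
  rcases eq_or_ne i j with rfl | hij
  · exact hi
  obtain ⟨m, es, hes, hi0, hjm, hchain⟩ := hconn i j hij
  have hchainP : ∀ r, ∀ w ∈ es r, P w := by
    intro r
    induction r using Fin.induction with
    | zero => exact hP _ (hes 0) i hi0 hi
    | succ r ih =>
      obtain ⟨v, hv⟩ := hchain r
      exact hP _ (hes _) v (mem_inter.mp hv).2 (ih v (mem_inter.mp hv).1)
  exact hchainP _ j hjm

section Laplacian

variable {n k : ℕ} {E : Finset (Finset (Fin n))}

theorem lapR_eq_sum (x : Fin n → ℝ) (i : Fin n) :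
    lapR k E x i = ∑ e ∈ E.filter (fun e => i ∈ e), (x i ^ (k - 1) - ∏ j ∈ e.erase i, x j) := by
  rw [sum_sub_distrib, sum_const, nsmul_eq_mul, lapR, hdeg]

theorem lapR_signVector_eq_zero (hkeven : Even k) (hE : ∀ e ∈ E, #e = k) {S : Finset (Fin n)}
    (hS : ∀ e ∈ E, Even #(e ∩ S)) (i : Fin n) : lapR k E (signVector S) i = 0 := by
  rw [lapR_eq_sum]
  refine sum_eq_zero fun e he => ?_
  obtain ⟨heE, hie⟩ := mem_filter.mp he
  have hk : 1 ≤ k := hE e heE ▸ card_pos.mpr ⟨i, hie⟩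
  have hprod : signVector S i * ∏ j ∈ e.erase i, (signVector S j : ℝ) = 1 := by
    rw [mul_prod_erase e _ hie, prod_signVector, (hS e heE).neg_one_pow]
  rw [signVector_pow_of_odd S i (Nat.Even.sub_odd hk hkeven odd_one), sub_eq_zero]
  calc signVector S i = signVector S i * (signVector S i * ∏ j ∈ e.erase i, signVector S j) := by
        rw [hprod, mul_one]
    _ = ∏ j ∈ e.erase i, signVector S j := by rw [← mul_assoc, signVector_mul_self, one_mul]

variable {x : Fin n → ℝ} {M : ℝ} {i : Fin n} {e : Finset (Fin n)}

theorem prod_eq_pow_of_abs_eq_max (hkeven : Even k) (hE : ∀ e ∈ E, #e = k)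
    (hle : ∀ j, |x j| ≤ M) (hxi : |x i| = M) (hl : lapR k E x i = 0) (he : e ∈ E)
    (hie : i ∈ e) : ∏ j ∈ e, x j = M ^ k := by
  have hterm : ∀ f ∈ E.filter (fun e => i ∈ e),
      x i * (x i ^ (k - 1) - ∏ j ∈ f.erase i, x j) = M ^ k - ∏ j ∈ f, x j := by
    intro f hf
    obtain ⟨hfE, hif⟩ := mem_filter.mp hf
    have hk : 1 ≤ k := hE f hfE ▸ card_pos.mpr ⟨i, hif⟩
    rw [mul_sub, ← pow_succ', Nat.sub_add_cancel hk, ← hkeven.pow_abs, hxi,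
      mul_prod_erase f x hif]
  have hnonneg : ∀ f ∈ E.filter (fun e => i ∈ e), 0 ≤ M ^ k - ∏ j ∈ f, x j := by
    intro f hf
    have hbound : ∏ j ∈ f, x j ≤ M ^ k := calc
      ∏ j ∈ f, x j ≤ ∏ j ∈ f, |x j| := (le_abs_self _).trans (abs_prod _ _).le
      _ ≤ ∏ _j ∈ f, M := prod_le_prod (fun _ _ => abs_nonneg _) (fun j _ => hle j)
      _ = M ^ k := by rw [prod_const, hE f (mem_filter.mp hf).1]
    exact sub_nonneg.mpr hbound
  have hsum : ∑ f ∈ E.filter (fun e => i ∈ e), (M ^ k - ∏ j ∈ f, x j) = 0 := by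
    rw [← sum_congr rfl hterm, ← mul_sum, ← lapR_eq_sum, hl, mul_zero]
  exact (sub_eq_zero.mp ((sum_eq_zero_iff_of_nonneg hnonneg).mp hsum e
    (mem_filter.mpr ⟨he, hie⟩))).symm

theorem abs_eq_of_abs_eq_max (hkeven : Even k) (hE : ∀ e ∈ E, #e = k) (hM : 0 < M)
    (hle : ∀ j, |x j| ≤ M) (hxi : |x i| = M) (hl : lapR k E x i = 0) (he : e ∈ E)
    (hie : i ∈ e) : ∀ j ∈ e, |x j| = M := by
  refine eq_of_prod_eq_pow_card hM (fun _ _ => abs_nonneg _) (fun j _ => hle j) ?_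
  rw [← abs_prod, prod_eq_pow_of_abs_eq_max hkeven hE hle hxi hl he hie,
    abs_of_pos (pow_pos hM k), hE e he]

theorem even_card_inter_neg_of_lapR_eq_zero (hkeven : Even k) (hE : ∀ e ∈ E, #e = k)
    (hl : ∀ i, lapR k E x i = 0) (hM : 0 < M) (hall : ∀ j, |x j| = M) (he : e ∈ E) :
    Even #(e ∩ univ.filter (fun j => x j < 0)) := by
  set S := univ.filter (fun j => x j < 0)
  have hx : ∀ j, x j = M * signVector S j := by
    intro j
    have := hall j
    unfold signVector
    split_ifs with hj
    · rw [abs_of_neg (mem_filter.mp hj).2] at this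
      linarith
    · rw [abs_of_nonneg (by simpa [S] using hj)] at this
      linarith
  obtain rfl | ⟨i, hie⟩ := e.eq_empty_or_nonempty
  · simp
  have hprod := prod_eq_pow_of_abs_eq_max hkeven hE (fun j => (hall j).le) (hall i) (hl i) he hie
  simp_rw [hx, prod_mul_distrib, prod_const, prod_signVector, hE e he] at hprod
  exact (neg_one_pow_eq_one_iff_even (by norm_num)).mp
    (mul_left_cancel₀ (pow_ne_zero _ hM.ne') (hprod.trans (mul_one _).symm))

end Laplacian

theorem stmt_12_general {n k : ℕ} (hkeven : Even k)
    (E : Finset (Finset (Fin n))) (hE : ∀ e ∈ E, e.card = k)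
    (hconn : HConnected E) :
    (∃ x : Fin n → ℝ, x ≠ 0 ∧ (∃ i, 0 < x i) ∧ (∃ i, x i < 0) ∧
        ∀ i, lapR k E x i = 0) ↔
      ∃ S : Finset (Fin n), S.Nonempty ∧ Sᶜ.Nonempty ∧
        ∀ e ∈ E, Even (e ∩ S).card := by
  constructor
  · rintro ⟨x, -, ⟨ip, hip⟩, ⟨im, him⟩, hl⟩
    obtain ⟨i, -, hmax⟩ := exists_max_image univ (fun j => |x j|) ⟨ip, mem_univ ip⟩
    have hle : ∀ j, |x j| ≤ |x i| := fun j => hmax j (mem_univ j)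
    have hM : 0 < |x i| := hip.trans_le ((le_abs_self _).trans (hle ip))
    have hall : ∀ j, |x j| = |x i| := hconn.forall_of_edge_closed
      (fun e he v hve hv => abs_eq_of_abs_eq_max hkeven hE hM hle hv (hl v) he hve) rfl
    exact ⟨univ.filter (fun j => x j < 0), ⟨im, by simpa using him⟩, ⟨ip, by simpa using hip.le⟩,
      fun e he => even_card_inter_neg_of_lapR_eq_zero hkeven hE hl hM hall he⟩
  · rintro ⟨S, ⟨s, hs⟩, ⟨t, ht⟩, hS⟩
    have hpos : (0 : ℝ) < signVector S t := by simp [signVector, mem_compl.mp ht]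
    refine ⟨signVector S, fun h => by simp [h] at hpos, ⟨t, hpos⟩, ⟨s, by simp [signVector, hs]⟩,
      lapR_signVector_eq_zero hkeven hE hS⟩

theorem stmt_12 {n k : ℕ} (hk : 3 ≤ k) (hn : k ≤ n) (hkeven : Even k)
    (E : Finset (Finset (Fin n))) (hE : ∀ e ∈ E, e.card = k)
    (hconn : HConnected E) (hne : E.Nonempty) :
    (∃ x : Fin n → ℝ, x ≠ 0 ∧ (∃ i, 0 < x i) ∧ (∃ i, x i < 0) ∧
        ∀ i, lapR k E x i = 0) ↔
      ∃ S : Finset (Fin n), S.Nonempty ∧ Sᶜ.Nonempty ∧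
        ∀ e ∈ E, Even (e ∩ S).card :=
  stmt_12_general hkeven E hE hconn
end
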